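/- Let S be a numerical semigroup with minimal generators β₀ < β₁ < … < β_g (g ≥ 2) satisfying the plane-branch inequalities n_iβ_i < β_{i+1}, and suppose l_{g−1} = gcd(β₀,…,β_{g−1}) = 2 and S ≠ ⟨2,3⟩. Then β_{g−1} < δ, where δ = #(ℕ \ S). -/

import Mathlib

/-!
Since `l (g-1) = 2`, the generators `β i` with `i < g` are even and `β g` is odd, so an odd
element of `S` stays in `S` after subtracting `β g`. As `2 ∉ S`, the odd number `β g + 2` is a gap,
whence `β g + 2 < c = 2δ`. On the other hand `n_{g-1} = l (g-2) / l (g-1) ≥ 2`: every multiple of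
`l k` above `Σ_{i ≤ k} (n_i - 1) β_i` already lies in `⟨β 0, …, β k⟩`, and the plane-branch
inequalities put `β (g-1)` above this bound for `k = g - 2`, so `n_{g-1} = 1` would contradict
minimality. Hence `2 β (g-1) ≤ n_{g-1} β (g-1) < β g < 2δ - 2`.
-/

open Finset

open scoped Classical in
/-- Weight function of a subset `S ⊆ ℕ`:
`w0 S ℓ = #([0,ℓ) ∩ S) − #([0,ℓ) \ S)`. -/
noncomputable def w0 (S : Set ℕ) (l : ℕ) : ℤ :=
  (((Finset.range l).filter (fun k => k ∈ S)).card : ℤ) -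
    (((Finset.range l).filter (fun k => k ∉ S)).card : ℤ)

theorem Nat.exists_lt_div_gcd_mul_modEq {d b n : ℕ} (hd : 0 < d) (hn : Nat.gcd d b ∣ n) :
    ∃ j < d / Nat.gcd d b, j * b ≡ n [MOD d] := by
  set e := Nat.gcd d b
  have he : 0 < e := Nat.gcd_pos_of_pos_left b hd
  obtain ⟨s, rfl⟩ := hn
  have hm : d / e ≠ 0 := (Nat.div_pos (Nat.le_of_dvd hd (Nat.gcd_dvd_left d b)) he).ne'
  obtain ⟨j, hj, hjs⟩ :=
    Nat.exists_mul_mod_eq_of_coprime s (Nat.coprime_div_gcd_div_gcd he).symm hm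
  refine ⟨j, hj, ?_⟩
  have key := (show b / e * j ≡ s [MOD d / e] from hjs).mul_right' e
  rwa [Nat.div_mul_cancel (Nat.gcd_dvd_left d b), mul_right_comm,
    Nat.div_mul_cancel (Nat.gcd_dvd_right d b), mul_comm b, mul_comm s] at key

namespace AddSubmonoid

variable {s : Set ℕ}

theorem eq_zero_or_le_of_mem_closure {m x : ℕ} (hs : ∀ y ∈ s, m ≤ y) (hx : x ∈ closure s) :
    x = 0 ∨ m ≤ x := by
  induction hx using closure_induction with
  | mem y hy => exact .inr (hs y hy)
  | zero => exact .inl rfl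
  | add y z _ _ hy hz => omega

theorem dvd_of_mem_closure {d x : ℕ} (hs : ∀ y ∈ s, d ∣ y) (hx : x ∈ closure s) : d ∣ x := by
  induction hx using closure_induction with
  | mem y hy => exact hs y hy
  | zero => exact dvd_zero d
  | add y z _ _ hy hz => exact dvd_add hy hz

theorem sub_mem_closure_insert_of_not_dvd {b d x : ℕ} (hs : ∀ y ∈ s, d ∣ y)
    (hx : x ∈ closure (insert b s)) (hxd : ¬ d ∣ x) :
    b ≤ x ∧ x - b ∈ closure (insert b s) := by
  rw [Set.insert_eq, closure_union, mem_sup] at hx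
  obtain ⟨_, hy, z, hz, rfl⟩ := hx
  obtain ⟨_ | k, rfl⟩ := mem_closure_singleton.mp hy
  · exact absurd (dvd_of_mem_closure hs hz) (by simpa using hxd)
  refine ⟨le_add_right (by rw [succ_nsmul]; exact le_add_self), ?_⟩
  rw [succ_nsmul, add_right_comm, Nat.add_sub_cancel, Set.insert_eq, closure_union]
  exact add_mem (mem_sup_left (nsmul_mem (subset_closure (Set.mem_singleton b)) k))
    (mem_sup_right hz)

theorem add_two_lt_of_forall_le_mem_closure_insert {b c : ℕ} (hs : ∀ y ∈ s, 2 ∣ y)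
    (h2 : 2 ∉ closure (insert b s)) (hc : ∀ n, c ≤ n → n ∈ closure (insert b s)) :
    b + 2 < c := by
  have hodd : ¬ 2 ∣ b := fun hb => by
    have := dvd_of_mem_closure (by rintro _ (rfl | hy); exacts [hb, hs _ hy])
      (hc (2 * c + 1) (by omega))
    omega
  by_contra hle
  exact h2 (by simpa using
    (sub_mem_closure_insert_of_not_dvd hs (hc (b + 2) (by omega)) (by omega)).2)

end AddSubmonoid

theorem Set.two_mul_ncard_compl_eq_of_symm {S : Set ℕ} {c : ℕ} (hc : ∀ n, c ≤ n → n ∈ S)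
    (hsym : ∀ ℓ < c, ℓ ∈ S ↔ c - 1 - ℓ ∉ S) : 2 * Sᶜ.ncard = c := by
  classical
  have hgaps : Sᶜ = ↑((Finset.range c).filter (· ∉ S)) := by
    ext n
    simp only [Set.mem_compl_iff, Finset.coe_filter, Finset.mem_range, Set.mem_ofPred_eq]
    exact ⟨fun hn => ⟨by_contra fun h => hn (hc n (by omega)), hn⟩, And.right⟩
  have hreflect : ((Finset.range c).filter (· ∈ S)).card =
      ((Finset.range c).filter (· ∉ S)).card := by
    refine Finset.card_nbij' (c - 1 - ·) (c - 1 - ·) ?_ ?_ ?_ ?_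
    all_goals intro a ha
    all_goals simp only [Finset.coe_filter, Finset.mem_range, Set.mem_ofPred_eq] at ha ⊢
    · exact ⟨by omega, (hsym a ha.1).mp ha.2⟩
    · refine ⟨by omega, ?_⟩
      rw [hsym _ (by omega), Nat.sub_sub_self (by omega)]
      exact ha.2
    · omega
    · omega
  rw [hgaps, Set.ncard_coe_finset, two_mul]
  nth_rw 1 [← hreflect]
  rw [Finset.card_filter_add_card_filter_not, Finset.card_range]

theorem Set.setOf_exists_le_eq_insert (β : ℕ → ℕ) (g : ℕ) :
    {n | ∃ i ≤ g, β i = n} = insert (β g) {n | ∃ i < g, β i = n} := by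
  ext n
  constructor
  · rintro ⟨i, hi, rfl⟩
    rcases hi.lt_or_eq with hi | rfl
    exacts [.inr ⟨i, hi, rfl⟩, .inl rfl]
  · rintro (rfl | ⟨i, hi, rfl⟩)
    exacts [⟨g, le_rfl, rfl⟩, ⟨i, hi.le, rfl⟩]

structure IsGcdSeq (β l : ℕ → ℕ) : Prop where
  zero : l 0 = β 0
  succ : ∀ i, l (i + 1) = Nat.gcd (l i) (β (i + 1))

def conductorBound (β l : ℕ → ℕ) : ℕ → ℕ
  | 0 => 0
  | k + 1 => conductorBound β l k + (l k / l (k + 1) - 1) * β (k + 1)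

namespace IsGcdSeq

variable {β l : ℕ → ℕ}

theorem pos (hl : IsGcdSeq β l) (hβ : 0 < β 0) : ∀ k, 0 < l k
  | 0 => hl.zero ▸ hβ
  | k + 1 => hl.succ k ▸ Nat.gcd_pos_of_pos_left _ (hl.pos hβ k)

theorem dvd_of_le (hl : IsGcdSeq β l) {i j : ℕ} (hij : i ≤ j) : l j ∣ l i := by
  induction j, hij using Nat.le_induction with
  | base => rfl
  | succ j _ ih => exact (hl.succ j ▸ Nat.gcd_dvd_left _ _).trans ih

theorem dvd_gen (hl : IsGcdSeq β l) : ∀ i, l i ∣ β i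
  | 0 => hl.zero ▸ dvd_rfl
  | i + 1 => hl.succ i ▸ Nat.gcd_dvd_right _ _

theorem dvd_gen_of_le (hl : IsGcdSeq β l) {i k : ℕ} (hik : i ≤ k) : l k ∣ β i :=
  (hl.dvd_of_le hik).trans (hl.dvd_gen i)

theorem mem_closure_of_dvd_of_le (hl : IsGcdSeq β l) (hβ : 0 < β 0) {k n : ℕ}
    (hdvd : l k ∣ n) (hle : conductorBound β l k ≤ n) :
    n ∈ AddSubmonoid.closure {m | ∃ i ≤ k, β i = m} := by
  induction k generalizing n with
  | zero =>
    obtain ⟨t, rfl⟩ := hdvd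
    rw [hl.zero, mul_comm, ← smul_eq_mul]
    exact AddSubmonoid.nsmul_mem _ (AddSubmonoid.subset_closure
      (show β 0 ∈ {m | ∃ i ≤ 0, β i = m} from ⟨0, le_rfl, rfl⟩)) t
  | succ k ih =>
    -- peel off `j < n_{k+1}` copies of `β (k+1)` so that the rest is a multiple of `l k`
    obtain ⟨j, hj, hjn⟩ := Nat.exists_lt_div_gcd_mul_modEq (hl.pos hβ k) (hl.succ k ▸ hdvd)
    rw [← hl.succ k] at hj
    have hjle : conductorBound β l k + j * β (k + 1) ≤ conductorBound β l (k + 1) :=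
      Nat.add_le_add_left (Nat.mul_le_mul_right _ (by omega)) _
    have hrest : n - j * β (k + 1) ∈ AddSubmonoid.closure {m | ∃ i ≤ k, β i = m} :=
      ih ((Nat.modEq_iff_dvd' (by omega)).mp hjn) (by omega)
    have hmono : {m | ∃ i ≤ k, β i = m} ⊆ {m | ∃ i ≤ k + 1, β i = m} :=
      fun _ ⟨i, hi, hm⟩ => ⟨i, hi.trans k.le_succ, hm⟩
    rw [← Nat.sub_add_cancel (show j * β (k + 1) ≤ n by omega), ← smul_eq_mul]
    exact AddSubmonoid.add_mem _ (AddSubmonoid.closure_mono hmono hrest)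
      (AddSubmonoid.nsmul_mem _ (AddSubmonoid.subset_closure
        (show β (k + 1) ∈ {m | ∃ i ≤ k + 1, β i = m} from ⟨k + 1, le_rfl, rfl⟩)) j)

theorem conductorBound_lt {g : ℕ} (hl : IsGcdSeq β l)
    (hβ : ∀ i, 0 < β i)
    (hn : ∀ i, 1 ≤ i → i + 1 ≤ g → l (i - 1) * β i < l i * β (i + 1)) :
    ∀ k, k + 1 ≤ g → conductorBound β l k < β (k + 1)
  | 0, _ => hβ 1
  | k + 1, hk => by
    have ih := hl.conductorBound_lt hβ hn k (by omega)
    have hdvd := hl.dvd_of_le k.le_succ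
    have hlk : l (k + 1) * (l k / l (k + 1)) = l k := Nat.mul_div_cancel' hdvd
    have hpos := hl.pos (hβ 0) (k + 1)
    have hnk := hn (k + 1) (by omega) hk
    rw [Nat.add_sub_cancel] at hnk
    refine Nat.lt_of_mul_lt_mul_left (a := l (k + 1)) (lt_of_le_of_lt ?_ hnk)
    calc l (k + 1) * conductorBound β l (k + 1)
        = l (k + 1) * conductorBound β l k + (l k - l (k + 1)) * β (k + 1) := by
          rw [conductorBound, mul_add, ← mul_assoc, Nat.mul_sub, hlk, mul_one]
      _ ≤ l (k + 1) * β (k + 1) + (l k - l (k + 1)) * β (k + 1) := by gcongr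
      _ = l k * β (k + 1) := by
          rw [← add_mul, Nat.add_sub_cancel' (Nat.le_of_dvd (hl.pos (hβ 0) k) hdvd)]

theorem two_mul_le (hl : IsGcdSeq β l) (hβ : 0 < β 0) {k : ℕ}
    (hC : conductorBound β l k < β (k + 1))
    (hβk : β (k + 1) ∉ AddSubmonoid.closure {m | ∃ i ≤ k, β i = m}) :
    2 * l (k + 1) ≤ l k := by
  obtain ⟨t, ht⟩ := hl.dvd_of_le k.le_succ
  have hne : t ≠ 1 := fun h => hβk <|
    hl.mem_closure_of_dvd_of_le hβ (by rw [ht, h, mul_one]; exact hl.dvd_gen _) hC.le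
  have hpos := hl.pos hβ k
  rcases t with _ | _ | t
  · omega
  · exact absurd rfl hne
  · rw [ht]; nlinarith

end IsGcdSeq

theorem beta_gm1_lt_delta_general (S : Set ℕ) (c : ℕ)
    (hc : ∀ n, c ≤ n → n ∈ S)
    (hsym : ∀ ℓ < c, ℓ ∈ S ↔ (c - 1 - ℓ) ∉ S)
    (δ : ℕ) (hδ : δ = (Sᶜ : Set ℕ).ncard)
    (g : ℕ) (hg : 2 ≤ g) (β l : ℕ → ℕ)
    (hβpos : ∀ i, 0 < β i)
    (hβmono : ∀ i j, i < j → j ≤ g → β i < β j)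
    (hgen : S = (AddSubmonoid.closure {n : ℕ | ∃ i ≤ g, β i = n} : AddSubmonoid ℕ))
    (hmin : ∀ i ≤ g,
      β i ∉ (AddSubmonoid.closure {n : ℕ | ∃ j ≤ g, j ≠ i ∧ β j = n} : AddSubmonoid ℕ))
    (hl0 : l 0 = β 0)
    (hlrec : ∀ i, l (i + 1) = Nat.gcd (l i) (β (i + 1)))
    (hn : ∀ i, 1 ≤ i → i + 1 ≤ g → l (i - 1) * β i < l i * β (i + 1))
    (hlg1 : l (g - 1) = 2) :
    β (g - 1) < δ := by
  have hl : IsGcdSeq β l := ⟨hl0, hlrec⟩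
  obtain ⟨k, rfl⟩ : ∃ k, g = k + 2 := ⟨g - 2, by omega⟩
  simp only [show k + 2 - 1 = k + 1 by omega] at hlg1 hmin ⊢
  have hC : conductorBound β l k < β (k + 1) := hl.conductorBound_lt hβpos hn k (by omega)
  have hsub : {m | ∃ i ≤ k, β i = m} ⊆ {m | ∃ j ≤ k + 2, j ≠ k + 1 ∧ β j = m} :=
    fun _ ⟨i, hi, hm⟩ => ⟨i, by omega, by omega, hm⟩
  have hl4 : 4 ≤ l k := by
    simpa [hlg1] using hl.two_mul_le (hβpos 0) hC fun h =>
      hmin (k + 1) (by omega) (AddSubmonoid.closure_mono hsub h)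
  have hβg : 2 * β (k + 1) < β (k + 2) := by
    have := hn (k + 1) (by omega) le_rfl
    rw [Nat.add_sub_cancel, hlg1] at this
    nlinarith
  have h2 : 2 ∉ S := fun h => by
    have hβ0 : 4 ≤ β 0 := hl4.trans (Nat.le_of_dvd (hβpos 0) (hl.dvd_gen_of_le k.zero_le))
    have hgen_ge : ∀ y ∈ {n | ∃ i ≤ k + 2, β i = n}, β 0 ≤ y := by
      rintro _ ⟨_ | i, hi, rfl⟩
      exacts [le_rfl, (hβmono 0 (i + 1) i.succ_pos hi).le]
    have := AddSubmonoid.eq_zero_or_le_of_mem_closure hgen_ge (hgen ▸ h)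
    omega
  rw [Set.setOf_exists_le_eq_insert] at hgen
  subst hgen
  have hβc := AddSubmonoid.add_two_lt_of_forall_le_mem_closure_insert
    (s := {n | ∃ i < k + 2, β i = n})
    (fun _ ⟨i, hi, h⟩ => h ▸ hlg1 ▸ hl.dvd_gen_of_le (by omega)) h2 hc
  have hcδ := Set.two_mul_ncard_compl_eq_of_symm hc hsym
  omega

theorem beta_gm1_lt_delta (S : Set ℕ) (h0 : 0 ∈ S)
    (hadd : ∀ a b, a ∈ S → b ∈ S → a + b ∈ S)
    (hfin : (Sᶜ : Set ℕ).Finite) (c : ℕ)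
    (hc : ∀ n, c ≤ n → n ∈ S)
    (hcmin : ∀ c', (∀ n, c' ≤ n → n ∈ S) → c ≤ c')
    (hsym : ∀ ℓ < c, ℓ ∈ S ↔ (c - 1 - ℓ) ∉ S)
    (δ : ℕ) (hδ : δ = (Sᶜ : Set ℕ).ncard)
    (g : ℕ) (hg : 2 ≤ g) (β l : ℕ → ℕ)
    (hβpos : ∀ i, 0 < β i)
    (hβmono : ∀ i j, i < j → j ≤ g → β i < β j)
    (hgen : S = (AddSubmonoid.closure {n : ℕ | ∃ i ≤ g, β i = n} : AddSubmonoid ℕ))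
    (hmin : ∀ i ≤ g,
      β i ∉ (AddSubmonoid.closure {n : ℕ | ∃ j ≤ g, j ≠ i ∧ β j = n} : AddSubmonoid ℕ))
    (hl0 : l 0 = β 0)
    (hlrec : ∀ i, l (i + 1) = Nat.gcd (l i) (β (i + 1)))
    (hn : ∀ i, 1 ≤ i → i + 1 ≤ g → l (i - 1) * β i < l i * β (i + 1))
    (hlg1 : l (g - 1) = 2)
    (hne : S ≠ (AddSubmonoid.closure ({2, 3} : Set ℕ) : AddSubmonoid ℕ)) :
    β (g - 1) < δ :=
  beta_gm1_lt_delta_general S c hc hsym δ hδ g hg β l hβpos hβmono hgen hmin hl0 hlrec hn hlg1
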